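/- arXiv:1602.08426 — 2 statements merged into one kernel-verified Lean document; each statement's English description precedes it below -/
import Mathlib

section
/- Let (X,d) be a finite metric space with X = A ∪ B, A and B nonempty, and let α > 0. Suppose φ_A : A → ℝ^a and φ_B : B → ℝ^b are non-contracting embeddings with ‖φ_A‖_Lip ≤ D_A and ‖φ_B‖_Lip ≤ D_B. Then there exists a map ψ : X → ℝ^b such that: (1) ‖ψ(a₁) − ψ(a₂)‖ ≤ 2·(1 + 1/α)·D_A·D_B·d(a₁,a₂) for all a₁,a₂ ∈ A; (2) d(b₁,b₂) ≤ ‖ψ(b₁) − ψ(b₂)‖ ≤ D_B·d(b₁,b₂) for all b₁,b₂ ∈ B; and (3) for all a ∈ A and b ∈ B, d(a,b) − (1+α)·(2·D_A·D_B + 1)·R_a ≤ ‖ψ(a) − ψ(b)‖ ≤ (2·(1+α)·D_A·D_B + (2+α)·D_B)·d(a,b), where R_a = d(a,B). -/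
/-!
Let `π x ∈ B` be a nearest point, so `d(x, π x) = R_x`. Treating the points of `A` in increasing
order of `R`, choose greedily a net `N ⊆ A`: each `x ∈ A` is within `α R_x` of some `c ∈ N` with
`R_c ≤ R_x`, and distinct `c, c' ∈ N` satisfy `α max(R_c, R_c') < d(c, c')`. This separation makes
`π` `(1 + 2/α)`-Lipschitz on `N`, so `φ_B ∘ π ∘ φ_A⁻¹` is `(1 + 2/α) D_B`-Lipschitz on `φ_A(N)`.
Kirszbraun's theorem extends it with the same constant to a map `g` on `φ_A(A)`, and `ψ` is
`g ∘ φ_A` on `A` and `φ_B` on `B`. A pair `a ∈ A`, `b ∈ B` is compared through the net point `c`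
of `a`, for which `ψ c = φ_B (π c)` and `d(a, π c) ≤ (1 + α) R_a`.

Kirszbraun's theorem for finite sets follows from the minimax argument: a minimiser `y₀` of
`max_p d(y, f p) / d(x, p)` lies in the convex hull of the images of the active points `p` (or else
moving towards that hull lowers the maximum), and the variance identity
`∑ᵢⱼ wᵢ wⱼ ‖uᵢ - uⱼ‖² = 2 ∑ᵢ wᵢ ‖uᵢ - q‖² - 2 ‖∑ᵢ wᵢ uᵢ - q‖²`, applied to the active images
around `y₀` and to the active points around `x`, bounds the minimax ratio by the Lipschitz constant.
-/

open Set Filter Topology Metric Function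
open scoped NNReal RealInnerProductSpace

section

variable {F G : Type*} [NormedAddCommGroup F] [InnerProductSpace ℝ F]
  [NormedAddCommGroup G] [InnerProductSpace ℝ G]

theorem sum_sum_mul_norm_sub_sq {ι : Type*} [Fintype ι] {w : ι → ℝ} (hw : ∑ i, w i = 1)
    (u : ι → G) (q : G) :
    ∑ i, ∑ j, w i * w j * ‖u i - u j‖ ^ 2 =
      2 * ∑ i, w i * ‖u i - q‖ ^ 2 - 2 * ‖∑ i, w i • u i - q‖ ^ 2 := by
  have hcenter : ∑ i, w i • u i - q = ∑ i, w i • (u i - q) := by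
    simp only [smul_sub, Finset.sum_sub_distrib, ← Finset.sum_smul, hw, one_smul]
  have hsq : ‖∑ i, w i • (u i - q)‖ ^ 2 = ∑ i, ∑ j, w i * w j * ⟪u i - q, u j - q⟫ := by
    rw [← real_inner_self_eq_norm_sq]
    simp_rw [sum_inner, inner_sum, real_inner_smul_left, real_inner_smul_right, mul_assoc]
  have hterm : ∀ i j, w i * w j * ‖u i - u j‖ ^ 2 = w i * ‖u i - q‖ ^ 2 * w j
      - 2 * (w i * w j * ⟪u i - q, u j - q⟫) + w i * (w j * ‖u j - q‖ ^ 2) := by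
    intro i j
    rw [← sub_sub_sub_cancel_right (u i) (u j) q, norm_sub_sq_real]
    ring
  simp only [hterm, Finset.sum_add_distrib, Finset.sum_sub_distrib, ← Finset.mul_sum,
    ← Finset.sum_mul, hw, hcenter, hsq]
  ring

theorem le_of_dist_sum_smul_eq_mul {ι : Type*} [Fintype ι] {w : ι → ℝ} (hw₀ : ∀ i, 0 ≤ w i)
    (hw₁ : ∑ i, w i = 1) {p : ι → F} {q : ι → G} {L t : ℝ} {x : F} (hL : 0 ≤ L)
    (hq : ∀ i j, dist (q i) (q j) ≤ L * dist (p i) (p j)) (hx : ∀ i, p i ≠ x)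
    (ht : ∀ i, dist (∑ j, w j • q j) (q i) = t * dist x (p i)) : t ≤ L := by
  set s := ∑ i, w i * dist x (p i) ^ 2
  have hs : 0 < s := by
    obtain ⟨i, hi⟩ : ∃ i, 0 < w i := by
      by_contra! h
      have : ∑ i, w i ≤ 0 := Finset.sum_nonpos fun i _ => h i
      linarith
    calc 0 < w i * dist x (p i) ^ 2 := by
          have := dist_pos.2 (hx i).symm
          positivity
      _ ≤ s := Finset.single_le_sum (f := fun i => w i * dist x (p i) ^ 2)
          (fun j _ => by have := hw₀ j; positivity) (Finset.mem_univ i)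
  have himage : ∑ i, ∑ j, w i * w j * ‖q i - q j‖ ^ 2 = 2 * t ^ 2 * s := by
    have hi : ∀ i, w i * ‖q i - ∑ j, w j • q j‖ ^ 2 = t ^ 2 * (w i * dist x (p i) ^ 2) := by
      intro i
      rw [← dist_eq_norm, dist_comm, ht]
      ring
    rw [sum_sum_mul_norm_sub_sq hw₁ q (∑ j, w j • q j), sub_self, norm_zero]
    simp only [hi, ← Finset.mul_sum, s]
    ring
  have hsource : ∑ i, ∑ j, w i * w j * ‖p i - p j‖ ^ 2 ≤ 2 * s := by
    rw [sum_sum_mul_norm_sub_sq hw₁ p x]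
    simp only [← dist_eq_norm, dist_comm (p _) x, s]
    nlinarith [sq_nonneg ‖∑ i, w i • p i - x‖]
  have hcompare : ∑ i, ∑ j, w i * w j * ‖q i - q j‖ ^ 2
      ≤ L ^ 2 * ∑ i, ∑ j, w i * w j * ‖p i - p j‖ ^ 2 := by
    simp only [Finset.mul_sum]
    refine Finset.sum_le_sum fun i _ => Finset.sum_le_sum fun j _ => ?_
    calc w i * w j * ‖q i - q j‖ ^ 2 ≤ w i * w j * (L * ‖p i - p j‖) ^ 2 := by
          have := mul_nonneg (hw₀ i) (hw₀ j)
          gcongr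
          simpa only [dist_eq_norm] using hq i j
      _ = L ^ 2 * (w i * w j * ‖p i - p j‖ ^ 2) := by ring
  have hsq : t ^ 2 * (2 * s) ≤ L ^ 2 * (2 * s) :=
    calc t ^ 2 * (2 * s) = ∑ i, ∑ j, w i * w j * ‖q i - q j‖ ^ 2 := by rw [himage]; ring
      _ ≤ L ^ 2 * ∑ i, ∑ j, w i * w j * ‖p i - p j‖ ^ 2 := hcompare
      _ ≤ L ^ 2 * (2 * s) := by gcongr
  exact (abs_le_of_sq_le_sq' (le_of_mul_le_mul_right hsq (by positivity)) hL).2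

theorem eventually_dist_add_smul_lt {y z u : G} (h : 0 < ⟪z - y, u⟫) :
    ∀ᶠ ε in 𝓝[>] (0 : ℝ), dist (y + ε • u) z < dist y z := by
  have hsmall : ∀ᶠ ε in 𝓝[>] (0 : ℝ), ε * ‖u‖ ^ 2 < 2 * ⟪z - y, u⟫ := by
    have : Tendsto (fun ε : ℝ => ε * ‖u‖ ^ 2) (𝓝 0) (𝓝 0) := by
      simpa using (continuous_mul_const (‖u‖ ^ 2)).tendsto 0
    exact nhdsWithin_le_nhds (this.eventually (gt_mem_nhds (by linarith)))
  filter_upwards [hsmall, self_mem_nhdsWithin] with ε hε (hpos : 0 < ε)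
  have hexpand : dist (y + ε • u) z ^ 2 = dist y z ^ 2 - ε * (2 * ⟪z - y, u⟫ - ε * ‖u‖ ^ 2) := by
    rw [dist_eq_norm, dist_eq_norm, show y + ε • u - z = ε • u - (z - y) by abel,
      norm_sub_sq_real, norm_smul, real_inner_smul_left, real_inner_comm (z - y) u,
      ← norm_neg (y - z), neg_sub, Real.norm_eq_abs, abs_of_pos hpos]
    ring
  refine lt_of_pow_lt_pow_left₀ 2 dist_nonneg ?_
  rw [hexpand]
  linarith [mul_pos hpos (sub_pos.2 hε)]

theorem exists_forall_inner_sub_pos [CompleteSpace G] {K : Set G} (hconv : Convex ℝ K)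
    (hclosed : IsClosed K) {y : G} (hy : y ∉ K) : ∃ u : G, ∀ z ∈ K, 0 < ⟪z - y, u⟫ := by
  obtain ⟨φ, c, hyc, hK⟩ := geometric_hahn_banach_point_closed hconv hclosed hy
  refine ⟨(InnerProductSpace.toDual ℝ G).symm φ, fun z hz => ?_⟩
  rw [real_inner_comm, InnerProductSpace.toDual_symm_apply, map_sub]
  linarith [hK z hz]

theorem exists_minimax_dist {ι M : Type*} [PseudoMetricSpace M] [ProperSpace M] {s : Set ι}
    (hs : s.Finite) (hne : s.Nonempty) (z : ι → M) {r : ι → ℝ} (hr : ∀ i ∈ s, 0 < r i) :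
    ∃ y₀ t, (∀ i ∈ s, dist y₀ (z i) ≤ t * r i) ∧ ∀ y, ∃ i ∈ s, t * r i ≤ dist y (z i) := by
  have hsne : hs.toFinset.Nonempty := by simpa
  set g : M → ℝ := fun y => hs.toFinset.sup' hsne fun i => dist y (z i) / r i
  have hg_le : ∀ y, ∀ i ∈ s, dist y (z i) / r i ≤ g y := fun y i hi =>
    Finset.le_sup' (fun i => dist y (z i) / r i) (hs.mem_toFinset.2 hi)
  obtain ⟨i₀, hi₀⟩ := hne
  have : Nonempty M := ⟨z i₀⟩
  have hcont : Continuous g := by fun_prop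
  have hcoer : Tendsto g (cocompact M) atTop := tendsto_atTop_mono (fun y => hg_le y i₀ hi₀)
    ((tendsto_dist_right_cocompact_atTop (z i₀)).atTop_div_const (hr i₀ hi₀))
  obtain ⟨y₀, hy₀⟩ := hcont.exists_forall_le hcoer
  refine ⟨y₀, g y₀, fun i hi => (div_le_iff₀ (hr i hi)).1 (hg_le y₀ i hi), fun y => ?_⟩
  obtain ⟨i, hi, hgi⟩ := Finset.exists_mem_eq_sup' hsne fun i => dist y (z i) / r i
  rw [Set.Finite.mem_toFinset] at hi
  exact ⟨i, hi, (le_div_iff₀ (hr i hi)).1 ((hy₀ y).trans hgi.le)⟩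

theorem mem_convexHull_of_minimax_dist [CompleteSpace G] {ι : Type*} {s : Set ι} (hs : s.Finite)
    (z : ι → G) (r : ι → ℝ) {y₀ : G} {t : ℝ} (hle : ∀ i ∈ s, dist y₀ (z i) ≤ t * r i)
    (hmin : ∀ y, ∃ i ∈ s, t * r i ≤ dist y (z i)) :
    y₀ ∈ convexHull ℝ (z '' {i ∈ s | dist y₀ (z i) = t * r i}) := by
  by_contra hy₀
  have hfin : (z '' {i ∈ s | dist y₀ (z i) = t * r i}).Finite :=
    (hs.subset (sep_subset _ _)).image z
  obtain ⟨u, hu⟩ := exists_forall_inner_sub_pos (convex_convexHull ℝ _)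
    (hfin.isCompact_convexHull ℝ).isClosed hy₀
  have hdescent : ∀ᶠ ε in 𝓝[>] (0 : ℝ), ∀ i ∈ s, dist (y₀ + ε • u) (z i) < t * r i := by
    rw [eventually_all_finite hs]
    intro i hi
    rcases (hle i hi).lt_or_eq with hlt | heq
    · have hcont : Continuous fun ε : ℝ => dist (y₀ + ε • u) (z i) := by fun_prop
      refine nhdsWithin_le_nhds (hcont.continuousAt.eventually_lt continuousAt_const ?_)
      simpa using hlt
    · refine (eventually_dist_add_smul_lt (hu _ ?_)).mono fun ε hε => heq ▸ hε
      exact subset_convexHull ℝ _ ⟨i, ⟨hi, heq⟩, rfl⟩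
  obtain ⟨ε, hε⟩ := hdescent.exists
  obtain ⟨i, hi, hti⟩ := hmin (y₀ + ε • u)
  exact (hε i hi).not_ge hti

theorem LipschitzOnWith.exists_dist_le_mul [FiniteDimensional ℝ G] {K : ℝ≥0} {f : F → G}
    {s : Set F} (hf : LipschitzOnWith K f s) (hs : s.Finite) (x : F) :
    ∃ y, ∀ p ∈ s, dist y (f p) ≤ K * dist x p := by
  by_cases hx : x ∈ s
  · exact ⟨f x, fun p hp => hf.dist_le_mul x hx p hp⟩
  rcases s.eq_empty_or_nonempty with rfl | hne
  · exact ⟨0, by simp⟩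
  have hr : ∀ p ∈ s, 0 < dist x p := fun p hp => dist_pos.2 (ne_of_mem_of_not_mem hp hx).symm
  obtain ⟨y₀, t, hle, hmin⟩ := exists_minimax_dist hs hne f hr
  suffices htK : t ≤ K from ⟨y₀, fun p hp => (hle p hp).trans (by gcongr)⟩
  obtain ⟨ι, _, w, q, hw₀, hw₁, hq, hy₀⟩ :=
    mem_convexHull_iff_exists_fintype.1 (mem_convexHull_of_minimax_dist hs f _ hle hmin)
  choose p hp hpq using hq
  refine le_of_dist_sum_smul_eq_mul hw₀ hw₁ (p := p) (q := q) K.2 (fun i j => ?_)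
    (fun i h => hx (h ▸ (hp i).1 :)) (fun i => ?_)
  · rw [← hpq i, ← hpq j]
    exact hf.dist_le_mul _ (hp i).1 _ (hp j).1
  · rw [hy₀, ← hpq i]
    exact (hp i).2

theorem LipschitzOnWith.update_insert {α β : Type*} [PseudoMetricSpace α] [PseudoMetricSpace β]
    [DecidableEq α] {K : ℝ≥0} {f : α → β} {s : Set α} {x : α} {y : β}
    (hf : LipschitzOnWith K f s) (hx : x ∉ s) (hy : ∀ p ∈ s, dist y (f p) ≤ K * dist x p) :
    LipschitzOnWith K (update f x y) (insert x s) := by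
  have hne : ∀ p ∈ s, p ≠ x := fun p hp h => hx (h ▸ hp)
  refine LipschitzOnWith.of_dist_le_mul ?_
  rintro p (rfl | hp) q (rfl | hq)
  · simp
  · simpa [update_of_ne (hne q hq)] using hy q hq
  · simpa [update_of_ne (hne p hp), dist_comm] using hy p hp
  · simpa [update_of_ne (hne p hp), update_of_ne (hne q hq)] using hf.dist_le_mul p hp q hq

theorem LipschitzOnWith.exists_extension_of_finite [FiniteDimensional ℝ G] {K : ℝ≥0}
    {f : F → G} {s t : Set F} (hf : LipschitzOnWith K f s) (hs : s.Finite) (ht : t.Finite) :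
    ∃ g, EqOn g f s ∧ LipschitzOnWith K g (s ∪ t) := by
  classical
  induction t, ht using Set.Finite.induction_on with
  | empty => exact ⟨f, eqOn_refl f s, by simpa using hf⟩
  | @insert x t _ ht ih =>
    obtain ⟨g, hgf, hg⟩ := ih
    rw [union_insert]
    by_cases hx : x ∈ s ∪ t
    · exact ⟨g, hgf, by rwa [insert_eq_of_mem hx]⟩
    obtain ⟨y, hy⟩ := hg.exists_dist_le_mul (hs.union ht) x
    refine ⟨update g x y, fun p hp => ?_, hg.update_insert hx hy⟩
    rw [update_of_ne (ne_of_mem_of_not_mem (mem_union_left t hp) hx), hgf hp]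

theorem LipschitzOnWith.comp_invFunOn {α β γ : Type*} [PseudoMetricSpace α] [PseudoMetricSpace β]
    [PseudoMetricSpace γ] [Nonempty α] {K : ℝ≥0} {h : α → β} {φ : α → γ} {s : Set α}
    (hh : LipschitzOnWith K h s) (hφ : ∀ x ∈ s, ∀ y ∈ s, dist x y ≤ dist (φ x) (φ y)) :
    LipschitzOnWith K (h ∘ invFunOn φ s) (φ '' s) := by
  refine LipschitzOnWith.of_dist_le_mul ?_
  rintro _ ⟨x, hx, rfl⟩ _ ⟨y, hy, rfl⟩
  obtain ⟨hx', hφx⟩ := invFunOn_pos (f := φ) ⟨x, hx, rfl⟩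
  obtain ⟨hy', hφy⟩ := invFunOn_pos (f := φ) ⟨y, hy, rfl⟩
  set x' := invFunOn φ s (φ x)
  set y' := invFunOn φ s (φ y)
  calc dist (h x') (h y') ≤ K * dist x' y' := hh.dist_le_mul _ hx' _ hy'
    _ ≤ K * dist (φ x') (φ y') := by gcongr; exact hφ _ hx' _ hy'
    _ = K * dist (φ x) (φ y) := by rw [hφx, hφy]

theorem LipschitzOnWith.exists_factor_through_of_le_dist [FiniteDimensional ℝ G] {X : Type*}
    [MetricSpace X] [Nonempty X] {A N : Set X} {K : ℝ≥0} {h : X → G}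
    (hh : LipschitzOnWith K h N) (hA : A.Finite) (hNA : N ⊆ A) {φ : X → F}
    (hφ : ∀ x ∈ A, ∀ y ∈ A, dist x y ≤ dist (φ x) (φ y)) :
    ∃ g : F → G, EqOn (g ∘ φ) h N ∧ LipschitzOnWith K g (φ '' A) := by
  have hφN : ∀ x ∈ N, ∀ y ∈ N, dist x y ≤ dist (φ x) (φ y) := fun x hx y hy =>
    hφ x (hNA hx) y (hNA hy)
  have hinj : InjOn φ N := fun x hx y hy hxy =>
    dist_le_zero.1 (by simpa [hxy] using hφN x hx y hy)
  obtain ⟨g, hgh, hg⟩ := (hh.comp_invFunOn hφN).exists_extension_of_finite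
    ((hA.subset hNA).image φ) (hA.image φ)
  refine ⟨g, fun c hc => ?_, hg.mono subset_union_right⟩
  rw [comp_apply, hgh (mem_image_of_mem φ hc), comp_apply, hinj.leftInvOn_invFunOn hc]

theorem Finset.exists_net {X : Type*} [PseudoMetricSpace X] (s : Finset X) (r : X → ℝ)
    (hr : ∀ x ∈ s, 0 ≤ r x) :
    ∃ N ⊆ s, (N : Set X).Pairwise (fun c₁ c₂ => max (r c₁) (r c₂) < dist c₁ c₂) ∧
      ∀ x ∈ s, ∃ c ∈ N, dist x c ≤ r x ∧ r c ≤ r x := by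
  classical
  induction s using Finset.induction_on_max_value r with
  | empty => exact ⟨∅, subset_refl _, by simp, by simp⟩
  | insert a s _ hmax ih =>
    obtain ⟨N, hNs, hsep, hcov⟩ := ih fun x hx => hr x (mem_insert_of_mem hx)
    by_cases hclose : ∃ c ∈ N, dist a c ≤ r a
    · obtain ⟨c, hc, hac⟩ := hclose
      refine ⟨N, hNs.trans (subset_insert _ _), hsep, fun x hx => ?_⟩
      rcases mem_insert.1 hx with rfl | hx
      · exact ⟨c, hc, hac, hmax c (hNs hc)⟩
      · exact hcov x hx
    push Not at hclose
    refine ⟨insert a N, insert_subset_insert _ hNs, ?_, fun x hx => ?_⟩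
    · rw [coe_insert]
      refine hsep.insert fun c hc _ => ?_
      have hlt : max (r a) (r c) < dist a c := by
        rw [max_eq_left (hmax c (hNs hc))]
        exact hclose c hc
      exact ⟨hlt, by rwa [max_comm, dist_comm]⟩
    rcases mem_insert.1 hx with rfl | hx
    · exact ⟨x, mem_insert_self _ _, by simpa using hr x (mem_insert_self _ _), le_rfl⟩
    · obtain ⟨c, hc, hxc⟩ := hcov x hx
      exact ⟨c, mem_insert_of_mem hc, hxc⟩

theorem lipschitzOnWith_of_pairwise_max_lt {X : Type*} [PseudoMetricSpace X] {N : Set X}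
    {π : X → X} {α : ℝ} (hα : 0 < α)
    (hN : N.Pairwise fun c₁ c₂ => max (α * dist c₁ (π c₁)) (α * dist c₂ (π c₂)) < dist c₁ c₂) :
    LipschitzOnWith (1 + 2 / α).toNNReal π N := by
  refine LipschitzOnWith.of_dist_le_mul fun c₁ h₁ c₂ h₂ => ?_
  rw [Real.coe_toNNReal _ (by positivity)]
  rcases eq_or_ne c₁ c₂ with rfl | hne
  · simp
  have hsep := hN h₁ h₂ hne
  have hπ₁ : dist c₁ (π c₁) ≤ dist c₁ c₂ / α := by
    rw [le_div_iff₀ hα, mul_comm]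
    exact (le_max_left _ _).trans hsep.le
  have hπ₂ : dist c₂ (π c₂) ≤ dist c₁ c₂ / α := by
    rw [le_div_iff₀ hα, mul_comm]
    exact (le_max_right _ _).trans hsep.le
  calc dist (π c₁) (π c₂) ≤ dist (π c₁) c₁ + dist c₁ c₂ + dist c₂ (π c₂) := dist_triangle4 _ _ _ _
    _ ≤ dist c₁ c₂ + 2 * (dist c₁ c₂ / α) := by rw [dist_comm (π c₁)]; linarith
    _ = (1 + 2 / α) * dist c₁ c₂ := by ring

theorem exists_extension_through_net [FiniteDimensional ℝ G] {X : Type*} [MetricSpace X]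
    [Nonempty X] {A B N : Set X} (hA : A.Finite) (hNA : N ⊆ A) {π : X → X}
    (hπB : ∀ c ∈ N, π c ∈ B) {DA DB α : ℝ} (hDB : 0 ≤ DB) (hα : 0 < α)
    (hN : N.Pairwise fun c₁ c₂ => max (α * dist c₁ (π c₁)) (α * dist c₂ (π c₂)) < dist c₁ c₂)
    {φA : X → F}
    (hφA : ∀ x ∈ A, ∀ y ∈ A, dist x y ≤ dist (φA x) (φA y) ∧ dist (φA x) (φA y) ≤ DA * dist x y)
    {φB : X → G} (hφB : ∀ x ∈ B, ∀ y ∈ B, dist (φB x) (φB y) ≤ DB * dist x y) :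
    ∃ g : F → G, EqOn (g ∘ φA) (φB ∘ π) N ∧
      ∀ x ∈ A, ∀ y ∈ A, dist (g (φA x)) (g (φA y)) ≤ (1 + 2 / α) * DA * DB * dist x y := by
  have hφB' : LipschitzOnWith DB.toNNReal φB B := LipschitzOnWith.of_dist_le_mul
    fun x hx y hy => by simpa only [Real.coe_toNNReal _ hDB] using hφB x hx y hy
  obtain ⟨g, hgN, hg⟩ := (hφB'.comp (lipschitzOnWith_of_pairwise_max_lt hα hN) hπB
    ).exists_factor_through_of_le_dist hA hNA fun x hx y hy => (hφA x hx y hy).1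
  refine ⟨g, hgN, fun x hx y hy => ?_⟩
  calc dist (g (φA x)) (g (φA y)) ≤ DB * (1 + 2 / α) * dist (φA x) (φA y) := by
        simpa only [NNReal.coe_mul, Real.coe_toNNReal _ hDB,
          Real.coe_toNNReal (1 + 2 / α) (by positivity)]
          using hg.dist_le_mul _ (mem_image_of_mem φA hx) _ (mem_image_of_mem φA hy)
    _ ≤ DB * (1 + 2 / α) * (DA * dist x y) := by gcongr; exact (hφA x hx y hy).2
    _ = (1 + 2 / α) * DA * DB * dist x y := by ring

theorem exists_anchored_extension [FiniteDimensional ℝ G] {X : Type*} [MetricSpace X] [Finite X]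
    {A B : Set X} (hB : B.Nonempty) {DA DB α : ℝ} (hDA : 0 ≤ DA) (hDB : 0 ≤ DB) (hα : 0 < α)
    {φA : X → F}
    (hφA : ∀ x ∈ A, ∀ y ∈ A, dist x y ≤ dist (φA x) (φA y) ∧ dist (φA x) (φA y) ≤ DA * dist x y)
    {φB : X → G} (hφB : ∀ x ∈ B, ∀ y ∈ B, dist (φB x) (φB y) ≤ DB * dist x y) :
    ∃ ψ : X → G, (∀ x ∈ B, ψ x = φB x) ∧
      (∀ x ∈ A, ∀ y ∈ A, dist (ψ x) (ψ y) ≤ (1 + 2 / α) * DA * DB * dist x y) ∧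
      ∀ x ∈ A, ∃ p ∈ B, dist x p ≤ (1 + α) * infDist x B ∧
        dist (ψ x) (φB p) ≤ (2 + α) * DA * DB * infDist x B := by
  classical
  have : Nonempty X := ⟨hB.some⟩
  choose π hπB hπ using fun x => B.toFinite.isCompact.exists_infDist_eq_dist hB x
  obtain ⟨N, hNA, hNsep, hNcov⟩ :=
    A.toFinite.toFinset.exists_net (fun x => α * infDist x B) fun _ _ =>
      mul_nonneg hα.le infDist_nonneg
  simp only [hπ] at hNsep hNcov
  have hNA' : (N : Set X) ⊆ A := fun c hc => A.toFinite.mem_toFinset.1 (hNA hc)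
  obtain ⟨g, hgN, hgA⟩ := exists_extension_through_net A.toFinite hNA' (fun c _ => hπB c) hDB hα
    hNsep hφA hφB
  set ψ : X → G := fun x => if x ∈ B then φB x else g (φA x)
  have hψA : ∀ x ∈ A, ψ x = g (φA x) := by
    intro x hx
    by_cases hxB : x ∈ B
    -- `R_x = 0` forces the net point of `x` to be `x` itself
    · obtain ⟨c, hcN, hxc, -⟩ := hNcov x (A.toFinite.mem_toFinset.2 hx)
      have hπx : dist x (π x) = 0 := by rw [← hπ, infDist_zero_of_mem hxB]
      rw [hπx, mul_zero, dist_le_zero] at hxc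
      subst hxc
      have hgx : g (φA x) = φB (π x) := hgN hcN
      simp only [ψ, if_pos hxB, hgx, (dist_eq_zero.1 hπx).symm]
    · simp [ψ, hxB]
  refine ⟨ψ, fun x hx => if_pos hx,
    fun x hx y hy => by rw [hψA x hx, hψA y hy]; exact hgA x hx y hy, fun x hx => ?_⟩
  obtain ⟨c, hcN, hxc, hcx⟩ := hNcov x (A.toFinite.mem_toFinset.2 hx)
  have hcx' : dist c (π c) ≤ dist x (π x) := le_of_mul_le_mul_left hcx hα
  refine ⟨π c, hπB c, ?_, ?_⟩
  · rw [hπ]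
    calc dist x (π c) ≤ dist x c + dist c (π c) := dist_triangle _ _ _
      _ ≤ (1 + α) * dist x (π x) := by linarith
  · have hgc : g (φA c) = φB (π c) := hgN hcN
    rw [hψA x hx, ← hgc, hπ]
    calc dist (g (φA x)) (g (φA c)) ≤ (1 + 2 / α) * DA * DB * dist x c := hgA x hx c (hNA' hcN)
      _ ≤ (1 + 2 / α) * DA * DB * (α * dist x (π x)) := by gcongr
      _ = (2 + α) * DA * DB * dist x (π x) := by field_simp; ring

end

theorem exists_psi_map_general
    {X : Type*} [MetricSpace X] [Fintype X] (A B : Set X)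
    (hB : B.Nonempty)
    (a b : ℕ) (DA DB α : ℝ) (hDA : 1 ≤ DA) (hDB : 1 ≤ DB) (hα : 0 < α)
    (φA : X → EuclideanSpace ℝ (Fin a))
    (hφA : ∀ x ∈ A, ∀ y ∈ A,
      dist x y ≤ dist (φA x) (φA y) ∧ dist (φA x) (φA y) ≤ DA * dist x y)
    (φB : X → EuclideanSpace ℝ (Fin b))
    (hφB : ∀ x ∈ B, ∀ y ∈ B,
      dist x y ≤ dist (φB x) (φB y) ∧ dist (φB x) (φB y) ≤ DB * dist x y) :
    ∃ ψ : X → EuclideanSpace ℝ (Fin b),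
      (∀ a₁ ∈ A, ∀ a₂ ∈ A,
        dist (ψ a₁) (ψ a₂) ≤ 2 * (1 + 1 / α) * DA * DB * dist a₁ a₂) ∧
      (∀ b₁ ∈ B, ∀ b₂ ∈ B,
        dist b₁ b₂ ≤ dist (ψ b₁) (ψ b₂) ∧ dist (ψ b₁) (ψ b₂) ≤ DB * dist b₁ b₂) ∧
      (∀ x ∈ A, ∀ y ∈ B,
        dist x y - (1 + α) * (2 * DA * DB + 1) * Metric.infDist x B
            ≤ dist (ψ x) (ψ y) ∧
        dist (ψ x) (ψ y) ≤ (2 * (1 + α) * DA * DB + (2 + α) * DB) * dist x y) := by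
  have hDA0 : 0 ≤ DA := by linarith
  have hDB0 : 0 ≤ DB := by linarith
  have hM : 0 ≤ DA * DB := mul_nonneg hDA0 hDB0
  obtain ⟨ψ, hψB, hψA, hanchor⟩ :=
    exists_anchored_extension hB hDA0 hDB0 hα hφA fun x hx y hy => (hφB x hx y hy).2
  refine ⟨ψ, fun a₁ h₁ a₂ h₂ => (hψA a₁ h₁ a₂ h₂).trans ?_,
    fun b₁ h₁ b₂ h₂ => by simpa only [hψB b₁ h₁, hψB b₂ h₂] using hφB b₁ h₁ b₂ h₂,
    fun x hx y hy => ?_⟩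
  · have hconst : 2 * (1 + 1 / α) * DA * DB = (1 + 2 / α) * DA * DB + DA * DB := by ring
    exact mul_le_mul_of_nonneg_right (by linarith) dist_nonneg
  obtain ⟨p, hpB, hxp, hψp⟩ := hanchor x hx
  have hR : infDist x B ≤ dist x y := infDist_le_dist_of_mem hy
  have hpy := hφB p hpB y hy
  have hDBpy : DB * dist p y ≤ DB * ((1 + α) * infDist x B + dist x y) := by
    gcongr
    linarith [dist_triangle p x y, dist_comm p x]
  have hcoef : 0 ≤ (2 + α) * (DA * DB) + (1 + α) * DB := by positivity
  rw [hψB y hy]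
  constructor
  · linarith [dist_triangle x p y, dist_triangle (φB p) (ψ x) (φB y), dist_comm (φB p) (ψ x),
      mul_nonneg (mul_nonneg hα.le hM) (infDist_nonneg : 0 ≤ infDist x B)]
  · linarith [dist_triangle (ψ x) (φB p) (φB y), mul_le_mul_of_nonneg_left hR hcoef,
      mul_nonneg (mul_nonneg hα.le hM) (dist_nonneg : 0 ≤ dist x y)]

/-- Lemma `ψ`: given a finite metric space `X = A ∪ B` (`A`, `B` nonempty),
non-contracting embeddings `φ_A : A → ℝ^a`, `φ_B : B → ℝ^b` with Lipschitz
constants at most `D_A`, `D_B`, and `α > 0`, there is a map `ψ : X → ℝ^b` that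
is `2(1+1/α)·D_A·D_B`-Lipschitz on `A`, coincides in distances with a
non-contracting `D_B`-Lipschitz embedding on `B`, and satisfies
`d(a,b) - (1+α)(2·D_A·D_B+1)·R_a ≤ ‖ψ(a)-ψ(b)‖ ≤ (2(1+α)·D_A·D_B+(2+α)·D_B)·d(a,b)`
for `a ∈ A`, `b ∈ B`, where `R_a = d(a,B)`. -/
theorem exists_psi_map
    {X : Type*} [MetricSpace X] [Fintype X] (A B : Set X)
    (hAB : A ∪ B = Set.univ) (hA : A.Nonempty) (hB : B.Nonempty)
    (a b : ℕ) (DA DB α : ℝ) (hDA : 1 ≤ DA) (hDB : 1 ≤ DB) (hα : 0 < α)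
    (φA : X → EuclideanSpace ℝ (Fin a))
    (hφA : ∀ x ∈ A, ∀ y ∈ A,
      dist x y ≤ dist (φA x) (φA y) ∧ dist (φA x) (φA y) ≤ DA * dist x y)
    (φB : X → EuclideanSpace ℝ (Fin b))
    (hφB : ∀ x ∈ B, ∀ y ∈ B,
      dist x y ≤ dist (φB x) (φB y) ∧ dist (φB x) (φB y) ≤ DB * dist x y) :
    ∃ ψ : X → EuclideanSpace ℝ (Fin b),
      (∀ a₁ ∈ A, ∀ a₂ ∈ A,
        dist (ψ a₁) (ψ a₂) ≤ 2 * (1 + 1 / α) * DA * DB * dist a₁ a₂) ∧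
      (∀ b₁ ∈ B, ∀ b₂ ∈ B,
        dist b₁ b₂ ≤ dist (ψ b₁) (ψ b₂) ∧ dist (ψ b₁) (ψ b₂) ≤ DB * dist b₁ b₂) ∧
      (∀ x ∈ A, ∀ y ∈ B,
        dist x y - (1 + α) * (2 * DA * DB + 1) * Metric.infDist x B
            ≤ dist (ψ x) (ψ y) ∧
        dist (ψ x) (ψ y) ≤ (2 * (1 + α) * DA * DB + (2 + α) * DB) * dist x y) :=
  exists_psi_map_general A B hB a b DA DB α hDA hDB hα φA hφA φB hφB
end

section
/- There exists an absolute constant C > 0 such that the following holds. Let (X,d) be a finite metric space that is the union of two subsets A and B. Let U and V be normed spaces, and suppose A embeds into U with distortion at most D_A and B embeds into V with distortion at most D_B. Let E_A ≥ 1 be such that every Lipschitz map from any subset of A into V extends to a map from all of A into V whose Lipschitz constant is at most E_A times that of the original map; let E_B ≥ 1 be the analogous constant for maps from subsets of B into U. Then X embeds into U ⊕ V ⊕ ℝ with distortion at most C·(E_A·D_B + D_A·E_B). -/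
/-!
Rescale both embeddings to be non-contracting. To extend `ψ_A : A → U` to `X`, choose a nearest
point `proj y ∈ A` of every `y` and a set `T ⊆ B` whose points are pairwise separated at the scale
of their distance to `A` and which covers `B` at that scale. On `T` the map `ψ_A ∘ proj` is
`5 D_A`-Lipschitz, so it extends to `B` with constant `5 D_A E_B`, and the extension stays within
`9 D_A E_B d(y, A)` of `ψ_A (proj y)`. Glued with `ψ_A` it gives `u : X → U`, Lipschitz with
constant `11 D_A E_B`, with `d(x, y) ≤ ‖u x - u y‖ + 10 D_A E_B d(y, A)` for `x ∈ A`, `y ∈ B`.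
The error term is paid for by the coordinate `10 D_A E_B (d(x, A) - d(x, B))`, and the
symmetric extension `v` of `ψ_B` takes care of pairs inside `B`.
-/

open Metric Set WithLp

namespace WithLp

variable {α β γ : Type*} [SeminormedAddCommGroup α] [SeminormedAddCommGroup β]
  [SeminormedAddCommGroup γ]

theorem prod_norm_le_norm_fst_add_norm_snd (x : WithLp 2 (α × β)) : ‖x‖ ≤ ‖x.fst‖ + ‖x.snd‖ := by
  rw [prod_norm_eq_of_L2, Real.sqrt_le_left (by positivity)]
  nlinarith [norm_nonneg x.fst, norm_nonneg x.snd]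

theorem norm_toLp_toLp_le (a : α) (b : β) (c : γ) :
    ‖toLp 2 (a, toLp 2 (b, c))‖ ≤ ‖a‖ + ‖b‖ + ‖c‖ := by
  have := prod_norm_le_norm_fst_add_norm_snd (toLp 2 (b, c))
  have := prod_norm_le_norm_fst_add_norm_snd (toLp 2 (a, toLp 2 (b, c)))
  simp only [toLp_fst, toLp_snd] at *
  linarith

end WithLp

theorem forall_pair_of_union_eq_univ {X : Type*} {A B : Set X} (hAB : A ∪ B = univ)
    {P : X → X → Prop} (hP : ∀ x y, P x y → P y x) (hAA : ∀ x ∈ A, ∀ y ∈ A, P x y)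
    (hBB : ∀ x ∈ B, ∀ y ∈ B, P x y) (hAB' : ∀ x ∈ A, ∀ y ∈ B, P x y) : ∀ x y, P x y := by
  intro x y
  have hx : x ∈ A ∪ B := hAB ▸ mem_univ x
  have hy : y ∈ A ∪ B := hAB ▸ mem_univ y
  rcases hx with hx | hx <;> rcases hy with hy | hy
  exacts [hAA x hx y hy, hAB' x hx y hy, hP y x (hAB' y hy x hx), hBB x hx y hy]

variable {X : Type*} [MetricSpace X]

/-- `e(B, W) ≤ E`, for maps defined on subsets of `B`. -/
def HasLipschitzExtensionConst (B : Set X) (W : Type*) [NormedAddCommGroup W] (E : ℝ) : Prop :=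
  ∀ S : Set X, S ⊆ B → ∀ (g : X → W) (K : ℝ), 0 ≤ K →
    (∀ x ∈ S, ∀ y ∈ S, ‖g x - g y‖ ≤ K * dist x y) →
    ∃ g' : X → W, (∀ x ∈ S, g' x = g x) ∧ ∀ x ∈ B, ∀ y ∈ B, ‖g' x - g' y‖ ≤ E * K * dist x y

variable {W : Type*} [NormedAddCommGroup W]

theorem exists_normalized_embedding [NormedSpace ℝ W] {A : Set X} {D : ℝ}
    (h : ∃ (φ : X → W) (c : ℝ), 0 < c ∧ ∀ x ∈ A, ∀ y ∈ A,
      c * dist x y ≤ ‖φ x - φ y‖ ∧ ‖φ x - φ y‖ ≤ c * D * dist x y) :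
    ∃ ψ : X → W, ∀ x ∈ A, ∀ y ∈ A, dist x y ≤ ‖ψ x - ψ y‖ ∧ ‖ψ x - ψ y‖ ≤ D * dist x y := by
  obtain ⟨φ, c, hc, hφ⟩ := h
  refine ⟨fun x => c⁻¹ • φ x, fun x hx y hy => ?_⟩
  rw [← smul_sub, norm_smul, Real.norm_of_nonneg (inv_nonneg.2 hc.le), le_inv_mul_iff₀ hc,
    inv_mul_le_iff₀ hc, ← mul_assoc]
  exact hφ x hx y hy

theorem exists_nearestPoint_map [Finite X] {A : Set X} (hA : A.Nonempty) :
    ∃ proj : X → X, (∀ x, proj x ∈ A) ∧ ∀ x, dist x (proj x) = infDist x A := by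
  choose proj hproj hdist using A.toFinite.isCompact.exists_infDist_eq_dist hA
  exact ⟨proj, hproj, fun x => (hdist x).symm⟩

theorem exists_infDist_net [Finite X] (A B : Set X) :
    ∃ T ⊆ B, (∀ s ∈ T, ∀ t ∈ T, s ≠ t → infDist s A ≤ 2 * dist s t) ∧
      ∀ y ∈ B, ∃ p ∈ T, dist y p ≤ infDist y A := by
  obtain ⟨T, ⟨hTB, hTsep⟩, hTmax⟩ := (toFinite {T : Set X | T ⊆ B ∧
    ∀ s ∈ T, ∀ t ∈ T, s ≠ t → infDist s A ≤ 2 * dist s t}).exists_maximal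
    ⟨∅, empty_subset B, by simp⟩
  refine ⟨T, hTB, hTsep, fun y hy => ?_⟩
  by_contra! hfar
  have hyT : y ∉ T := fun hyT => (hfar y hyT).not_ge (by simp [infDist_nonneg])
  refine hyT (hTmax ⟨insert_subset hy hTB, ?_⟩ (subset_insert y T) (mem_insert y T))
  rintro s (rfl | hs) t (rfl | ht) hst
  · exact absurd rfl hst
  · linarith [hfar t ht, dist_nonneg (x := s) (y := t)]
  · linarith [hfar s hs, infDist_le_infDist_add_dist (x := s) (y := t) (s := A), dist_comm s t]
  · exact hTsep s hs t ht hst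

section NearestPoint

variable {A : Set X} {proj : X → X} (hproj : ∀ x, proj x ∈ A)
  (hdist : ∀ x, dist x (proj x) = infDist x A)
include hproj hdist

theorem norm_sub_comp_proj_le {ψ : X → W} {D : ℝ} (hD : 0 ≤ D)
    (hψ : ∀ x ∈ A, ∀ y ∈ A, ‖ψ x - ψ y‖ ≤ D * dist x y) (x y : X) :
    ‖ψ (proj x) - ψ (proj y)‖ ≤ D * (infDist x A + dist x y + infDist y A) := calc
  _ ≤ D * dist (proj x) (proj y) := hψ _ (hproj x) _ (hproj y)
  _ ≤ D * (dist (proj x) x + dist x y + dist y (proj y)) := by gcongr; exact dist_triangle4 ..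
  _ = D * (infDist x A + dist x y + infDist y A) := by rw [dist_comm, hdist, hdist]

theorem exists_lipschitzOn_near_comp_proj [Finite X] {B : Set X} {ψ : X → W} {D E : ℝ}
    (hD : 0 ≤ D) (hE : 1 ≤ E) (hψ : ∀ x ∈ A, ∀ y ∈ A, ‖ψ x - ψ y‖ ≤ D * dist x y)
    (hext : HasLipschitzExtensionConst B W E) :
    ∃ g : X → W, (∀ x ∈ B, ∀ y ∈ B, ‖g x - g y‖ ≤ 5 * (D * E) * dist x y) ∧
      ∀ y ∈ B, ‖g y - ψ (proj y)‖ ≤ 9 * (D * E) * infDist y A := by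
  obtain ⟨T, hTB, hTsep, hTcov⟩ := exists_infDist_net A B
  have hψT : ∀ s ∈ T, ∀ t ∈ T, ‖ψ (proj s) - ψ (proj t)‖ ≤ 5 * D * dist s t := by
    intro s hs t ht
    rcases eq_or_ne s t with rfl | hst
    · simp
    have := norm_sub_comp_proj_le hproj hdist hD hψ s t
    nlinarith [hTsep s hs t ht hst, hTsep t ht s hs hst.symm, dist_comm s t]
  obtain ⟨g, hgT, hgB⟩ := hext T hTB (fun z => ψ (proj z)) (5 * D) (by positivity) hψT
  refine ⟨g, fun x hx y hy => by linarith [hgB x hx y hy], fun y hy => ?_⟩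
  obtain ⟨p, hp, hyp⟩ := hTcov y hy
  have hpA : infDist p A ≤ 2 * infDist y A := by
    linarith [infDist_le_infDist_add_dist (x := p) (y := y) (s := A), dist_comm p y]
  calc ‖g y - ψ (proj y)‖ ≤ ‖g y - g p‖ + ‖ψ (proj p) - ψ (proj y)‖ := by
        rw [← hgT p hp]; exact norm_sub_le_norm_sub_add_norm_sub ..
    _ ≤ E * (5 * D) * dist y p + D * (infDist p A + dist p y + infDist y A) :=
        add_le_add (hgB y hy p (hTB hp)) (norm_sub_comp_proj_le hproj hdist hD hψ p y)
    _ ≤ 9 * (D * E) * infDist y A := by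
        rw [dist_comm p y]
        nlinarith [mul_le_mul_of_nonneg_left hyp (by positivity : 0 ≤ E * (5 * D)),
          mul_le_mul_of_nonneg_left hE (mul_nonneg hD (infDist_nonneg (x := y) (s := A)))]

theorem exists_extension_of_near_comp_proj {B : Set X} (hAB : A ∪ B = univ) {ψ g : X → W}
    {D K : ℝ} (hD : 0 ≤ D) (hDK : D ≤ K) (hK : 1 ≤ K)
    (hψ : ∀ x ∈ A, ∀ y ∈ A, dist x y ≤ ‖ψ x - ψ y‖ ∧ ‖ψ x - ψ y‖ ≤ D * dist x y)
    (hgB : ∀ x ∈ B, ∀ y ∈ B, ‖g x - g y‖ ≤ 5 * K * dist x y)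
    (hg_near : ∀ y ∈ B, ‖g y - ψ (proj y)‖ ≤ 9 * K * infDist y A) :
    ∃ u : X → W, (∀ x ∈ A, u x = ψ x) ∧ (∀ x y, ‖u x - u y‖ ≤ 11 * K * dist x y) ∧
      ∀ x ∈ A, ∀ y ∈ B, dist x y ≤ ‖u x - u y‖ + 10 * K * infDist y A := by
  classical
  have hproj_self : ∀ x ∈ A, proj x = x := fun x hx => by
    simpa [infDist_zero_of_mem hx, eq_comm] using hdist x
  set u := A.piecewise ψ g
  have huA : ∀ x ∈ A, u x = ψ x := fun x hx => piecewise_eq_of_mem _ _ _ hx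
  have huB : ∀ y ∈ B, u y = g y := by
    intro y hy
    by_cases hyA : y ∈ A
    · have := hg_near y hy
      rw [infDist_zero_of_mem hyA, mul_zero, norm_le_zero_iff, sub_eq_zero,
        hproj_self y hyA] at this
      rw [huA y hyA, this]
    · exact piecewise_eq_of_notMem _ _ _ hyA
  have hu_near : ∀ y ∈ B, ‖u y - ψ (proj y)‖ ≤ 9 * K * infDist y A := fun y hy =>
    huB y hy ▸ hg_near y hy
  refine ⟨u, huA, forall_pair_of_union_eq_univ hAB ?_ ?_ ?_ ?_, fun x hx y hy => ?_⟩
  · intro x y h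
    rwa [norm_sub_rev, dist_comm]
  · intro x hx y hy
    rw [huA x hx, huA y hy]
    exact (hψ x hx y hy).2.trans (mul_le_mul_of_nonneg_right (by linarith) dist_nonneg)
  · intro x hx y hy
    rw [huB x hx, huB y hy]
    exact (hgB x hx y hy).trans (mul_le_mul_of_nonneg_right (by linarith) dist_nonneg)
  · intro x hx y hy
    have hyA : infDist y A ≤ dist x y := dist_comm x y ▸ infDist_le_dist_of_mem hx
    have hcross : ‖u x - ψ (proj y)‖ ≤ D * (dist x y + infDist y A) := by
      simpa [huA x hx, hproj_self x hx, infDist_zero_of_mem hx] using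
        norm_sub_comp_proj_le hproj hdist hD (fun x hx y hy => (hψ x hx y hy).2) x y
    calc ‖u x - u y‖ ≤ ‖u x - ψ (proj y)‖ + ‖u y - ψ (proj y)‖ := by
          rw [norm_sub_rev (u y)]; exact norm_sub_le_norm_sub_add_norm_sub ..
      _ ≤ K * (dist x y + dist x y) + 9 * K * dist x y := by
        have hi := infDist_nonneg (x := y) (s := A)
        gcongr
        exacts [hcross.trans (mul_le_mul hDK (by linarith) (by linarith) (by linarith)),
          (hu_near y hy).trans (by gcongr)]
      _ = 11 * K * dist x y := by ring
  · have hψ_near : dist x (proj y) ≤ ‖u x - u y‖ + ‖u y - ψ (proj y)‖ := by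
      rw [huA x hx]
      exact (hψ x hx _ (hproj y)).1.trans (norm_sub_le_norm_sub_add_norm_sub ..)
    calc dist x y ≤ dist x (proj y) + infDist y A := hdist y ▸ dist_triangle_right ..
      _ ≤ ‖u x - u y‖ + 9 * K * infDist y A + infDist y A := by linarith [hu_near y hy]
      _ ≤ ‖u x - u y‖ + 10 * K * infDist y A := by
        nlinarith [infDist_nonneg (x := y) (s := A)]

end NearestPoint

theorem exists_extension_of_union_eq_univ [Finite X] {A B : Set X} (hAB : A ∪ B = univ)
    {ψ : X → W} {D E : ℝ} (hD : 1 ≤ D) (hE : 1 ≤ E)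
    (hψ : ∀ x ∈ A, ∀ y ∈ A, dist x y ≤ ‖ψ x - ψ y‖ ∧ ‖ψ x - ψ y‖ ≤ D * dist x y)
    (hext : HasLipschitzExtensionConst B W E) :
    ∃ u : X → W, (∀ x ∈ A, u x = ψ x) ∧ (∀ x y, ‖u x - u y‖ ≤ 11 * (D * E) * dist x y) ∧
      ∀ x ∈ A, ∀ y ∈ B, dist x y ≤ ‖u x - u y‖ + 10 * (D * E) * infDist y A := by
  rcases A.eq_empty_or_nonempty with rfl | hA
  · exact ⟨0, by simp, fun x y => by simp; positivity, by simp⟩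
  obtain ⟨proj, hproj, hdist⟩ := exists_nearestPoint_map hA
  obtain ⟨g, hgB, hg_near⟩ := exists_lipschitzOn_near_comp_proj hproj hdist (by linarith) hE
    (fun x hx y hy => (hψ x hx y hy).2) hext
  exact exists_extension_of_near_comp_proj hproj hdist hAB (by linarith)
    (le_mul_of_one_le_right (by linarith) hE) (one_le_mul_of_one_le_of_one_le hD hE) hψ hgB hg_near

theorem abs_infDist_sub_infDist_sub_le (A B : Set X) (x y : X) :
    |(infDist x A - infDist x B) - (infDist y A - infDist y B)| ≤ 2 * dist x y := by
  have := infDist_le_infDist_add_dist (x := x) (y := y) (s := A)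
  have := infDist_le_infDist_add_dist (x := y) (y := x) (s := A)
  have := infDist_le_infDist_add_dist (x := x) (y := y) (s := B)
  have := infDist_le_infDist_add_dist (x := y) (y := x) (s := B)
  rw [dist_comm y x] at *
  rw [abs_le]
  constructor <;> linarith

section UnionMap

variable {U V : Type*} [NormedAddCommGroup U] [NormedAddCommGroup V]

/-- The last coordinate separates points of `A` far from `B` from points of `B` far from `A`. -/
noncomputable def unionMap (A B : Set X) (u : X → U) (v : X → V) (K : ℝ) (x : X) :
    WithLp 2 (U × WithLp 2 (V × ℝ)) :=
  toLp 2 (u x, toLp 2 (v x, K * (infDist x A - infDist x B)))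

variable {A B : Set X} {u : X → U} {v : X → V} {K : ℝ}

theorem le_norm_unionMap_sub (x y : X) :
    ‖u x - u y‖ ≤ ‖unionMap A B u v K x - unionMap A B u v K y‖ ∧
      ‖v x - v y‖ ≤ ‖unionMap A B u v K x - unionMap A B u v K y‖ ∧
      |K * (infDist x A - infDist x B) - K * (infDist y A - infDist y B)| ≤
        ‖unionMap A B u v K x - unionMap A B u v K y‖ :=
  let z := unionMap A B u v K x - unionMap A B u v K y
  ⟨norm_fst_le _ z, (norm_fst_le _ z.snd).trans (norm_snd_le _ z),
    (Real.norm_eq_abs _).ge.trans ((norm_snd_le _ z.snd).trans (norm_snd_le _ z))⟩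

theorem norm_unionMap_sub_le {Lu Lv : ℝ} (hK : 0 ≤ K)
    (hu : ∀ x y, ‖u x - u y‖ ≤ Lu * dist x y) (hv : ∀ x y, ‖v x - v y‖ ≤ Lv * dist x y)
    (x y : X) :
    ‖unionMap A B u v K x - unionMap A B u v K y‖ ≤ (Lu + Lv + 2 * K) * dist x y := calc
  _ ≤ ‖u x - u y‖ + ‖v x - v y‖ +
      ‖K * (infDist x A - infDist x B) - K * (infDist y A - infDist y B)‖ :=
    norm_toLp_toLp_le _ _ _
  _ ≤ Lu * dist x y + Lv * dist x y + K * (2 * dist x y) := by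
    rw [Real.norm_eq_abs, ← mul_sub, abs_mul, abs_of_nonneg hK]
    gcongr
    exacts [hu x y, hv x y, abs_infDist_sub_infDist_sub_le A B x y]
  _ = (Lu + Lv + 2 * K) * dist x y := by ring

theorem dist_le_two_mul_norm_unionMap_sub (hAB : A ∪ B = univ) (hK : 0 ≤ K)
    (huA : ∀ x ∈ A, ∀ y ∈ A, dist x y ≤ ‖u x - u y‖)
    (hvB : ∀ x ∈ B, ∀ y ∈ B, dist x y ≤ ‖v x - v y‖)
    (hu_cross : ∀ x ∈ A, ∀ y ∈ B, dist x y ≤ ‖u x - u y‖ + K * infDist y A) :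
    ∀ x y, dist x y ≤ 2 * ‖unionMap A B u v K x - unionMap A B u v K y‖ := by
  have hz := le_norm_unionMap_sub (A := A) (B := B) (u := u) (v := v) (K := K)
  have hz₀ := fun x y => norm_nonneg (unionMap A B u v K x - unionMap A B u v K y)
  refine forall_pair_of_union_eq_univ hAB (fun x y h => ?_) (fun x hx y hy => ?_)
    (fun x hx y hy => ?_) (fun x hx y hy => ?_)
  · rwa [dist_comm, norm_sub_rev]
  · linarith [huA x hx y hy, (hz x y).1, hz₀ x y]
  · linarith [hvB x hx y hy, (hz x y).2.1, hz₀ x y]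
  · have hw := (hz x y).2.2
    rw [infDist_zero_of_mem hx, infDist_zero_of_mem hy] at hw
    have hsep : K * infDist y A ≤ |K * (0 - infDist x B) - K * (infDist y A - 0)| :=
      le_abs.2 (Or.inr (by linarith [mul_nonneg hK (infDist_nonneg (x := x) (s := B))]))
    linarith [hu_cross x hx y hy, (hz x y).1]

end UnionMap

/-- Union theorem for arbitrary normed spaces: there is an absolute constant
`C > 0` such that if a finite metric space `X = A ∪ B` embeds into normed
spaces `U`, `V` with distortions `D_A`, `D_B`, and the Lipschitz extension
constants for maps from subsets of `A` into `V` and from subsets of `B` into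
`U` are at most `E_A`, `E_B` respectively, then `X` embeds into `U ⊕ V ⊕ ℝ`
(with the `ℓ₂`-sum norm) with distortion at most `C·(E_A·D_B + D_A·E_B)`. -/
theorem union_embeds_into_normed_spaces :
    ∃ C : ℝ, 0 < C ∧
      ∀ (X : Type) [MetricSpace X] [Finite X] (A B : Set X),
        A ∪ B = Set.univ →
      ∀ (U : Type) [NormedAddCommGroup U] [NormedSpace ℝ U]
        (V : Type) [NormedAddCommGroup V] [NormedSpace ℝ V]
        (DA DB EA EB : ℝ), 1 ≤ DA → 1 ≤ DB → 1 ≤ EA → 1 ≤ EB →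
      -- `A` embeds into `U` with distortion at most `D_A`
      (∃ (φA : X → U) (cA : ℝ), 0 < cA ∧ ∀ x ∈ A, ∀ y ∈ A,
        cA * dist x y ≤ ‖φA x - φA y‖ ∧ ‖φA x - φA y‖ ≤ cA * DA * dist x y) →
      -- `B` embeds into `V` with distortion at most `D_B`
      (∃ (φB : X → V) (cB : ℝ), 0 < cB ∧ ∀ x ∈ B, ∀ y ∈ B,
        cB * dist x y ≤ ‖φB x - φB y‖ ∧ ‖φB x - φB y‖ ≤ cB * DB * dist x y) →
      -- Lipschitz maps from subsets of `A` into `V` extend to `A`, losing a factor `E_A`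
      (∀ S : Set X, S ⊆ A → ∀ (g : X → V) (K : ℝ), 0 ≤ K →
        (∀ x ∈ S, ∀ y ∈ S, ‖g x - g y‖ ≤ K * dist x y) →
        ∃ g' : X → V, (∀ x ∈ S, g' x = g x) ∧
          ∀ x ∈ A, ∀ y ∈ A, ‖g' x - g' y‖ ≤ EA * K * dist x y) →
      -- Lipschitz maps from subsets of `B` into `U` extend to `B`, losing a factor `E_B`
      (∀ S : Set X, S ⊆ B → ∀ (g : X → U) (K : ℝ), 0 ≤ K →
        (∀ x ∈ S, ∀ y ∈ S, ‖g x - g y‖ ≤ K * dist x y) →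
        ∃ g' : X → U, (∀ x ∈ S, g' x = g x) ∧
          ∀ x ∈ B, ∀ y ∈ B, ‖g' x - g' y‖ ≤ EB * K * dist x y) →
      ∃ (Ψ : X → WithLp 2 (U × WithLp 2 (V × ℝ))) (c : ℝ), 0 < c ∧
        ∀ x y : X, c * dist x y ≤ ‖Ψ x - Ψ y‖ ∧
          ‖Ψ x - Ψ y‖ ≤ c * (C * (EA * DB + DA * EB)) * dist x y := by
  refine ⟨62, by norm_num, ?_⟩
  intro X _ _ A B hAB U _ _ V _ _ DA DB EA EB hDA hDB hEA hEB hembA hembB hExtA hExtB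
  obtain ⟨ψA, hψA⟩ := exists_normalized_embedding hembA
  obtain ⟨ψB, hψB⟩ := exists_normalized_embedding hembB
  obtain ⟨u, huA, hu_lip, hu_cross⟩ := exists_extension_of_union_eq_univ hAB hDA hEB hψA hExtB
  obtain ⟨v, hvB, hv_lip, -⟩ :=
    exists_extension_of_union_eq_univ (union_comm A B ▸ hAB) hDB hEA hψB hExtA
  have hK : 0 ≤ 10 * (DA * EB) := by positivity
  refine ⟨unionMap A B u v (10 * (DA * EB)), 1 / 2, by norm_num, fun x y => ⟨?_, ?_⟩⟩
  · have := dist_le_two_mul_norm_unionMap_sub (v := v) hAB hK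
      (fun x hx y hy => by rw [huA x hx, huA y hy]; exact (hψA x hx y hy).1)
      (fun x hx y hy => by rw [hvB x hx, hvB y hy]; exact (hψB x hx y hy).1) hu_cross x y
    linarith
  · calc _ ≤ (11 * (DA * EB) + 11 * (DB * EA) + 2 * (10 * (DA * EB))) * dist x y :=
          norm_unionMap_sub_le hK hu_lip hv_lip x y
      _ ≤ 1 / 2 * (62 * (EA * DB + DA * EB)) * dist x y := by
          gcongr
          linarith [mul_nonneg (by linarith : (0 : ℝ) ≤ DB) (by linarith : (0 : ℝ) ≤ EA)]
end
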